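/- arXiv:2210.06380 — 3 statements merged into one kernel-verified Lean document; each statement's English description precedes it below -/
import Mathlib

section
/- Greedy approximation with errors: let F be monotone submodular with F(∅) = 0, and suppose a sequence x¹, …, xᴺ is chosen so that for each i, the marginal gain Δ(xⁱ | X^{1:i-1}) = F(X^{1:i-1} ∪ {xⁱ}) − F(X^{1:i-1}) satisfies Δ(xⁱ | X^{1:i-1}) ≥ max_x Δ(x | X^{1:i-1}) − rⁱ for errors rⁱ ≥ 0. Then F(X^{1:N}) ≥ (1 − 1/e) F(X*) − Σ_{i=1}^N rⁱ, where X* is an optimal set of size N. -/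
/-!
Let `d k = F X* - F(X^{1:k})`. By submodularity, `F X*` exceeds `F A` by at most the sum of the
`N` single-element gains at `A`, each of which is within `rᵏ` of the greedy gain; hence
`d (k+1) ≤ (1 - 1/N) d k + rᵏ`. Unrolling gives `d N ≤ (1 - 1/N)^N F X* + ∑ rⁱ`, and
`(1 - 1/N)^N ≤ 1/e`.
-/

open Finset

section Submodular

variable {V : Type*} [DecidableEq V] {F : Finset V → ℝ}

theorem sub_le_sum_marginal_sdiff
    (hsub : ∀ A B : Finset V, A ⊆ B → ∀ e ∉ B, F (insert e B) - F B ≤ F (insert e A) - F A)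
    (A S : Finset V) : F (A ∪ S) - F A ≤ ∑ e ∈ S \ A, (F (insert e A) - F A) := by
  induction S using Finset.induction_on with
  | empty => simp
  | insert e S heS ih =>
    by_cases heA : e ∈ A
    · rwa [union_insert, insert_eq_of_mem (mem_union_left S heA), insert_sdiff_of_mem S heA]
    · have heAS : e ∉ A ∪ S := by simp [heA, heS]
      have hgain := hsub A (A ∪ S) subset_union_left e heAS
      rw [union_insert, insert_sdiff_of_notMem S heA,
        sum_insert fun h => heS (mem_sdiff.mp h).1]
      linarith

theorem sub_le_card_mul_of_marginal_le
    (hmono : ∀ A B : Finset V, A ⊆ B → F A ≤ F B)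
    (hsub : ∀ A B : Finset V, A ⊆ B → ∀ e ∉ B, F (insert e B) - F B ≤ F (insert e A) - F A)
    {A : Finset V} {c : ℝ} (hc : 0 ≤ c) (hA : ∀ y, F (insert y A) - F A ≤ c) (S : Finset V) :
    F S - F A ≤ #S * c :=
  calc F S - F A ≤ F (A ∪ S) - F A := by linarith [hmono S (A ∪ S) subset_union_right]
    _ ≤ ∑ e ∈ S \ A, (F (insert e A) - F A) := sub_le_sum_marginal_sdiff hsub A S
    _ ≤ #(S \ A) * c := by simpa using sum_le_card_nsmul _ _ c fun e _ => hA e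
    _ ≤ #S * c := by gcongr; exact sdiff_subset

end Submodular

theorem le_pow_mul_add_sum_of_le_mul_add {q : ℝ} (hq₀ : 0 ≤ q) (hq₁ : q ≤ 1) (d : ℕ → ℝ) :
    ∀ (n : ℕ) (s : Fin n → ℝ), (∀ i, 0 ≤ s i) → (∀ i : Fin n, d (i + 1) ≤ q * d i + s i) →
      d n ≤ q ^ n * d 0 + ∑ i, s i
  | 0, _, _, _ => by simp
  | n + 1, s, hs, hd => by
    have ih := le_pow_mul_add_sum_of_le_mul_add hq₀ hq₁ d n (fun i => s i.castSucc)
      (fun i => hs _) (fun i => hd i.castSucc)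
    have hsum : q * ∑ i : Fin n, s i.castSucc ≤ ∑ i : Fin n, s i.castSucc :=
      mul_le_of_le_one_left (sum_nonneg fun i _ => hs _) hq₁
    rw [Fin.sum_univ_castSucc]
    calc d (n + 1) ≤ q * d n + s (Fin.last n) := hd (Fin.last n)
      _ ≤ q * (q ^ n * d 0 + ∑ i : Fin n, s i.castSucc) + s (Fin.last n) := by gcongr
      _ ≤ q ^ (n + 1) * d 0 + (∑ i : Fin n, s i.castSucc + s (Fin.last n)) := by
        rw [pow_succ']; linarith

theorem greedy_with_errors_general {V : Type*} [DecidableEq V]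
    (F : Finset V → ℝ)
    (hmono : ∀ A B : Finset V, A ⊆ B → F A ≤ F B)
    (hsub : ∀ A B : Finset V, A ⊆ B → ∀ e ∉ B, F (insert e B) - F B ≤ F (insert e A) - F A)
    (hempty : F ∅ = 0)
    (N : ℕ) (hN : 0 < N)
    (x : Fin N → V) (r : Fin N → ℝ) (hr : ∀ i, 0 ≤ r i)
    (Xset : ℕ → Finset V)
    (hXset : ∀ k : ℕ, Xset k = (Finset.univ.filter (fun j : Fin N => (j : ℕ) < k)).image x)
    (hgreedy : ∀ i : Fin N, ∀ y : V,
      F (insert y (Xset i)) - F (Xset i) - r i ≤ F (insert (x i) (Xset i)) - F (Xset i))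
    (Xstar : Finset V) (hcard : Xstar.card = N) :
    (1 - (Real.exp 1)⁻¹) * F Xstar - ∑ i, r i ≤ F (Xset N) := by
  have hN' : (0 : ℝ) < N := by exact_mod_cast hN
  have hX₀ : Xset 0 = ∅ := by simp [hXset]
  have hXsucc (i : Fin N) : Xset (i + 1) = insert (x i) (Xset i) := by
    ext v
    simp only [hXset, mem_image, mem_filter, mem_univ, true_and, mem_insert,
      Nat.lt_succ_iff_lt_or_eq, Fin.val_inj]
    grind
  have hstep (i : Fin N) : F Xstar - F (Xset (i + 1)) ≤
      (1 - 1 / N) * (F Xstar - F (Xset i)) + r i := by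
    set A := Xset i
    have hbound := sub_le_card_mul_of_marginal_le hmono hsub
      (c := F (insert (x i) A) - F A + r i) (by linarith [hr i, hmono _ _ (subset_insert (x i) A)])
      (fun y => by linarith [hgreedy i y]) Xstar
    have hdiv : (F Xstar - F A) / N ≤ F (insert (x i) A) - F A + r i := by
      rw [div_le_iff₀ hN', mul_comm]; rwa [hcard] at hbound
    rw [hXsucc, sub_mul, one_mul, one_div_mul_eq_div]
    linarith
  have hunroll := le_pow_mul_add_sum_of_le_mul_add (q := 1 - 1 / N)
    (by rw [sub_nonneg, div_le_one hN']; exact_mod_cast hN) (sub_le_self 1 (by positivity))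
    (fun k => F Xstar - F (Xset k)) N r hr hstep
  have hpow : (1 - 1 / (N : ℝ)) ^ N ≤ (Real.exp 1)⁻¹ := by
    rw [← Real.exp_neg]; exact Real.one_sub_div_pow_le_exp_neg (by exact_mod_cast hN)
  have hFstar : 0 ≤ F Xstar := hempty ▸ hmono _ _ (empty_subset Xstar)
  simp only [hX₀, hempty, sub_zero] at hunroll
  linarith [mul_le_mul_of_nonneg_right hpow hFstar]

/-- Greedy approximation with errors: if each pick is within `r i` of the best marginal gain,
then the final value is at least `(1 - 1/e) F(Xstar) - ∑ r i`. -/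
theorem greedy_with_errors {V : Type*} [Fintype V] [DecidableEq V]
    (F : Finset V → ℝ)
    (hmono : ∀ A B : Finset V, A ⊆ B → F A ≤ F B)
    (hsub : ∀ A B : Finset V, A ⊆ B → ∀ e ∉ B, F (insert e B) - F B ≤ F (insert e A) - F A)
    (hempty : F ∅ = 0)
    (N : ℕ) (hN : 0 < N)
    (x : Fin N → V) (r : Fin N → ℝ) (hr : ∀ i, 0 ≤ r i)
    (Xset : ℕ → Finset V)
    (hXset : ∀ k : ℕ, Xset k = (Finset.univ.filter (fun j : Fin N => (j : ℕ) < k)).image x)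
    (hgreedy : ∀ i : Fin N, ∀ y : V,
      F (insert y (Xset i)) - F (Xset i) - r i ≤ F (insert (x i) (Xset i)) - F (Xset i))
    (Xstar : Finset V) (hcard : Xstar.card = N)
    (hopt : ∀ Y : Finset V, Y.card ≤ N → F Y ≤ F Xstar) :
    (1 - (Real.exp 1)⁻¹) * F Xstar - ∑ i, r i ≤ F (Xset N) :=
  greedy_with_errors_general F hmono hsub hempty N hN x r hr Xset hXset hgreedy Xstar hcard
end

section
/- Confidence-interval regret bound for greedy coverage: suppose for all v ∈ V and all t, |ρ(v) − μ_{t-1}(v)| ≤ β_t^{1/2} σ_{t-1}(v). If at each time t agent i's location xᵢ_t maximizes Σ_{v ∈ Dᵢ⁻_t} (μ_{t-1}(v) + β_t^{1/2} σ_{t-1}(v)) over its feasible sensing regions, then the per-agent regret Reg^i(T) = Σ_{t=1}^T [Δ(x̃ⁱ_t | X^{1:i-1}_t) − Δ(xⁱ_t | X^{1:i-1}_t)] satisfies Reg^i(T) ≤ Σ_{t=1}^T 2 β_t^{1/2} Σ_{v ∈ Dᵢ⁻_t} σ_{t-1}(v) / |V|, where x̃ⁱ_t is the greedy-optimal choice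 under the true ρ. -/
open Finset

/-- Optimism in the face of uncertainty: the UCB-maximal set `s` loses at most twice its own
confidence width against any competitor `s'`, since
`ρ(s') ≤ UCB(s') ≤ UCB(s) ≤ ρ(s) + 2 w(s)`. -/
theorem sum_sub_sum_le_two_mul_sum_width_of_ucb_le {ι : Type*} (s s' : Finset ι)
    (ρ μ w : ι → ℝ) (hconf : ∀ v, |ρ v - μ v| ≤ w v)
    (hucb : ∑ v ∈ s', (μ v + w v) ≤ ∑ v ∈ s, (μ v + w v)) :
    ∑ v ∈ s', ρ v - ∑ v ∈ s, ρ v ≤ 2 * ∑ v ∈ s, w v := by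
  have hρ_le_ucb : ∑ v ∈ s', ρ v ≤ ∑ v ∈ s', (μ v + w v) :=
    sum_le_sum fun v _ => by linarith [(abs_le.mp (hconf v)).2]
  have hucb_le : ∑ v ∈ s, (μ v + w v) ≤ ∑ v ∈ s, ρ v + 2 * ∑ v ∈ s, w v := by
    rw [mul_sum, ← sum_add_distrib]
    exact sum_le_sum fun v _ => by linarith [(abs_le.mp (hconf v)).1]
  linarith

theorem ucb_greedy_regret_bound_general {V : Type*} [Fintype V] [DecidableEq V]
    (T : ℕ) (ρ : V → ℝ) (μ σf : Fin T → V → ℝ) (β : Fin T → ℝ)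
    (hconf : ∀ t v, |ρ v - μ t v| ≤ Real.sqrt (β t) * σf t v)
    (D : V → Finset V) (E : Fin T → Finset V)
    (x xt : Fin T → V)
    (hucb : ∀ t y, ∑ v ∈ D y \ E t, (μ t v + Real.sqrt (β t) * σf t v)
        ≤ ∑ v ∈ D (x t) \ E t, (μ t v + Real.sqrt (β t) * σf t v)) :
    ∑ t, ((∑ v ∈ D (xt t) \ E t, ρ v) / (Fintype.card V : ℝ)
        - (∑ v ∈ D (x t) \ E t, ρ v) / (Fintype.card V : ℝ))
      ≤ ∑ t, 2 * Real.sqrt (β t) * (∑ v ∈ D (x t) \ E t, σf t v) / (Fintype.card V : ℝ) := by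
  refine sum_le_sum fun t _ => ?_
  rw [div_sub_div_same, mul_assoc, mul_sum]
  exact div_le_div_of_nonneg_right
    (sum_sub_sum_le_two_mul_sum_width_of_ucb_le _ _ ρ (μ t) _ (hconf t) (hucb t (xt t)))
    (Nat.cast_nonneg _)

/-- Confidence-interval regret bound for greedy coverage: if the density lies in the
confidence intervals and each chosen location maximizes the UCB sum over its marginal
sensing region, then the per-agent regret is bounded by twice the confidence widths. -/
theorem ucb_greedy_regret_bound {V : Type*} [Fintype V] [DecidableEq V]
    (T : ℕ) (ρ : V → ℝ) (μ σf : Fin T → V → ℝ) (β : Fin T → ℝ)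
    (hσ : ∀ t v, 0 ≤ σf t v) (hβ : ∀ t, 0 ≤ β t)
    (hconf : ∀ t v, |ρ v - μ t v| ≤ Real.sqrt (β t) * σf t v)
    (D : V → Finset V) (E : Fin T → Finset V)
    (x xt : Fin T → V)
    (hucb : ∀ t y, ∑ v ∈ D y \ E t, (μ t v + Real.sqrt (β t) * σf t v)
        ≤ ∑ v ∈ D (x t) \ E t, (μ t v + Real.sqrt (β t) * σf t v))
    (hxt : ∀ t y, ∑ v ∈ D y \ E t, ρ v ≤ ∑ v ∈ D (xt t) \ E t, ρ v) :
    ∑ t, ((∑ v ∈ D (xt t) \ E t, ρ v) / (Fintype.card V : ℝ)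
        - (∑ v ∈ D (x t) \ E t, ρ v) / (Fintype.card V : ℝ))
      ≤ ∑ t, 2 * Real.sqrt (β t) * (∑ v ∈ D (x t) \ E t, σf t v) / (Fintype.card V : ℝ) :=
  ucb_greedy_regret_bound_general T ρ μ σf β hconf D E x xt hucb
end

section
/- Simple-regret bound at a single round of constrained greedy coverage: assume two-sided confidence bounds |ρ(v) − μ_{t-1}(v)| ≤ β_t^{1/2} σ_{t-1}(v) for all v, agents picked greedily by upper confidence bound within restricted sets. Then for each agent i, Δ(x̃ⁱ_t | X^{1:i-1}_t; ρ) − Δ(xⁱ_t | X^{1:i-1}_t; ρ) ≤ 2 β_t^{1/2} Σ_{v ∈ Dⁱ⁻_t} σ_{t-1}(v)/|V| ≤ 2 β_t^{1/2} C_D max_{v ∈ Dⁱ⁻_t} σ_{t-1}(v), where C_D = max_i |Dⁱ|/|V|. Summing over agents, if the total bound is at most ε, then F(X_t) ≥ (1 − 1/e) F(X*) − ε given the greedy-with-error guarantee. -/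
/-!
For each agent, the true-greedy location beats the UCB-greedy one by at most the width of the
confidence band on the UCB-greedy region: `ρ ≤ μ + w` on the former and `μ + w ≤ ρ + 2w` on the
latter, with the UCB objective in between. Bounding `σ` by its maximum and the region size by
`C_D |V|` gives the second inequality.

For the coverage guarantee, let `Aₖ` be the area covered by the first `k` agents. Since coverage
is submodular, the `N` optimal regions add at most `N gₖ` to `Aₖ`, where `gₖ` is the best marginal
gain; the chosen agent gains `gₖ - rₖ`. Hence the gap `F* - F(Aₖ)` contracts by `1 - 1/N` per
step up to the error `rₖ`, and after `N` steps `(1 - 1/N)ᴺ ≤ e⁻¹`.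
-/

open Finset

section ConfidenceBounds

variable {ι : Type*}

theorem sum_sub_sum_le_two_mul_sum_of_ucb_le (s t : Finset ι) {ρ μ w : ι → ℝ}
    (hconf : ∀ v, |ρ v - μ v| ≤ w v)
    (hucb : ∑ v ∈ s, (μ v + w v) ≤ ∑ v ∈ t, (μ v + w v)) :
    ∑ v ∈ s, ρ v - ∑ v ∈ t, ρ v ≤ 2 * ∑ v ∈ t, w v := by
  have h := calc
    ∑ v ∈ s, ρ v ≤ ∑ v ∈ s, (μ v + w v) :=
      sum_le_sum fun v _ => by linarith [(abs_le.mp (hconf v)).2]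
    _ ≤ ∑ v ∈ t, (μ v + w v) := hucb
    _ ≤ ∑ v ∈ t, (ρ v + 2 * w v) :=
      sum_le_sum fun v _ => by linarith [(abs_le.mp (hconf v)).1]
    _ = ∑ v ∈ t, ρ v + 2 * ∑ v ∈ t, w v := by rw [sum_add_distrib, mul_sum]
  linarith

theorem sum_div_card_le_mul_sup [Fintype ι] (s : Finset ι) (σ : ι → NNReal) {C : ℝ}
    (hs : (#s : ℝ) ≤ C * Fintype.card ι) :
    (∑ v ∈ s, (σ v : ℝ)) / Fintype.card ι ≤ C * ((s.sup σ : NNReal) : ℝ) := by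
  rcases isEmpty_or_nonempty ι with hι | hι
  · simp [eq_empty_of_isEmpty s]
  have hsup : ∑ v ∈ s, (σ v : ℝ) ≤ #s * ((s.sup σ : NNReal) : ℝ) := by
    simpa using sum_le_card_nsmul s (fun v => (σ v : ℝ)) _
      fun v hv => NNReal.coe_le_coe.mpr (le_sup hv)
  rw [div_le_iff₀ (by exact_mod_cast Fintype.card_pos)]
  nlinarith [(s.sup σ).coe_nonneg]

theorem regret_div_card_le_of_ucb_le [Fintype ι] (s t : Finset ι) {ρ μ : ι → ℝ}
    {σ : ι → NNReal} {β C : ℝ} (hconf : ∀ v, |ρ v - μ v| ≤ Real.sqrt β * (σ v : ℝ))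
    (hucb : ∑ v ∈ s, (μ v + Real.sqrt β * (σ v : ℝ)) ≤ ∑ v ∈ t, (μ v + Real.sqrt β * (σ v : ℝ)))
    (ht : (#t : ℝ) ≤ C * Fintype.card ι) :
    ((∑ v ∈ s, ρ v) - ∑ v ∈ t, ρ v) / (Fintype.card ι : ℝ)
        ≤ 2 * Real.sqrt β * (∑ v ∈ t, (σ v : ℝ)) / (Fintype.card ι : ℝ) ∧
      2 * Real.sqrt β * (∑ v ∈ t, (σ v : ℝ)) / (Fintype.card ι : ℝ)
        ≤ 2 * Real.sqrt β * C * ((t.sup σ : NNReal) : ℝ) := by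
  refine ⟨div_le_div_of_nonneg_right ?_ (Nat.cast_nonneg _), ?_⟩
  · have h := sum_sub_sum_le_two_mul_sum_of_ucb_le s t
      (w := fun v => Real.sqrt β * (σ v : ℝ)) hconf hucb
    rwa [← mul_sum, ← mul_assoc] at h
  · rw [mul_div_assoc, mul_assoc (2 * Real.sqrt β)]
    exact mul_le_mul_of_nonneg_left (sum_div_card_le_mul_sup t σ ht) (by positivity)

end ConfidenceBounds

theorem sub_le_pow_mul_add_sum_of_contraction {n : ℕ} {F q : ℝ} (hq0 : 0 ≤ q) (hq1 : q ≤ 1)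
    (a : ℕ → ℝ) (r : Fin n → ℝ) (hr : ∀ k, 0 ≤ r k)
    (hstep : ∀ k : Fin n, F - a (k + 1) ≤ q * (F - a k) + r k) :
    F - a n ≤ q ^ n * (F - a 0) + ∑ k, r k := by
  induction n with
  | zero => simp
  | succ n ih =>
    have hprev := ih (fun k => r k.castSucc) (fun k => hr _) fun k => hstep k.castSucc
    have hlast := hstep (Fin.last n)
    simp only [Fin.val_last] at hlast
    have hS : 0 ≤ ∑ k : Fin n, r k.castSucc := sum_nonneg fun k _ => hr _
    have hcontract := mul_le_mul_of_nonneg_left hprev hq0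
    rw [Fin.sum_univ_castSucc, pow_succ]
    linarith [mul_le_of_le_one_left hS hq1]

section GreedyCoverage

variable {V : Type*} [DecidableEq V]

theorem sum_union_le_of_nonneg {ρ : V → ℝ} (hρ : ∀ v, 0 ≤ ρ v) (s t : Finset V) :
    ∑ v ∈ s ∪ t, ρ v ≤ ∑ v ∈ s, ρ v + ∑ v ∈ t, ρ v := by
  rw [← sum_union_inter]
  linarith [sum_nonneg fun v (_ : v ∈ s ∩ t) => hρ v]

theorem sum_biUnion_le_of_nonneg {κ : Type*} {ρ : V → ℝ} (hρ : ∀ v, 0 ≤ ρ v) (s : Finset κ)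
    (t : κ → Finset V) : ∑ v ∈ s.biUnion t, ρ v ≤ ∑ j ∈ s, ∑ v ∈ t j, ρ v := by
  classical
  induction s using Finset.induction with
  | empty => simp
  | insert a s ha ih =>
    rw [biUnion_insert, sum_insert ha]
    linarith [sum_union_le_of_nonneg hρ (t a) (s.biUnion t)]

theorem sum_biUnion_le_sum_add_sum_sdiff {κ : Type*} {ρ : V → ℝ} (hρ : ∀ v, 0 ≤ ρ v)
    (s : Finset κ) (Q : κ → Finset V) (A : Finset V) :
    ∑ v ∈ s.biUnion Q, ρ v ≤ ∑ v ∈ A, ρ v + ∑ j ∈ s, ∑ v ∈ Q j \ A, ρ v := by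
  have hcover : s.biUnion Q ⊆ A ∪ s.biUnion fun j => Q j \ A := by
    intro v hv
    by_cases hA : v ∈ A
    · exact mem_union_left _ hA
    · obtain ⟨j, hj, hvj⟩ := mem_biUnion.mp hv
      exact mem_union_right _ (mem_biUnion.mpr ⟨j, hj, mem_sdiff.mpr ⟨hvj, hA⟩⟩)
  calc ∑ v ∈ s.biUnion Q, ρ v
      ≤ ∑ v ∈ A ∪ s.biUnion fun j => Q j \ A, ρ v :=
        sum_le_sum_of_subset_of_nonneg hcover fun v _ _ => hρ v
    _ ≤ _ := (sum_union_le_of_nonneg hρ _ _).trans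
        (add_le_add_right (sum_biUnion_le_of_nonneg hρ _ _) _)

def prefixUnion {n : ℕ} (P : Fin n → Finset V) (k : ℕ) : Finset V :=
  (univ.filter fun j : Fin n => (j : ℕ) < k).biUnion P

theorem prefixUnion_zero {n : ℕ} (P : Fin n → Finset V) : prefixUnion P 0 = ∅ := by
  simp [prefixUnion]

theorem prefixUnion_self {n : ℕ} (P : Fin n → Finset V) :
    prefixUnion P n = univ.biUnion P := by
  simp [prefixUnion]

theorem prefixUnion_succ {n : ℕ} (P : Fin n → Finset V) (k : Fin n) :
    prefixUnion P (k + 1) = prefixUnion P k ∪ P k := by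
  ext v
  simp only [prefixUnion, mem_biUnion, mem_filter, mem_univ, true_and, mem_union]
  constructor
  · rintro ⟨j, hj, hv⟩
    rcases Nat.lt_succ_iff_lt_or_eq.mp hj with hj | hj
    · exact Or.inl ⟨j, hj, hv⟩
    · exact Or.inr (Fin.ext hj ▸ hv)
  · rintro (⟨j, hj, hv⟩ | hv)
    · exact ⟨j, hj.trans k.val.lt_succ_self, hv⟩
    · exact ⟨k, k.val.lt_succ_self, hv⟩

theorem prefixUnion_coe {n : ℕ} (P : Fin n → Finset V) (i : Fin n) :
    prefixUnion P i = (univ.filter fun j => j < i).biUnion P := by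
  simp only [prefixUnion, Fin.val_fin_lt]

theorem sum_prefixUnion_succ {n : ℕ} (ρ : V → ℝ) (P : Fin n → Finset V) (k : Fin n) :
    ∑ v ∈ prefixUnion P (k + 1), ρ v
      = ∑ v ∈ prefixUnion P k, ρ v + ∑ v ∈ P k \ prefixUnion P k, ρ v := by
  rw [prefixUnion_succ, ← union_sdiff_self_eq_union, sum_union disjoint_sdiff]

theorem sum_biUnion_sub_sum_biUnion_le_of_greedy {n : ℕ} {ρ : V → ℝ} (hρ : ∀ v, 0 ≤ ρ v)
    (P Q : Fin n → Finset V) (g : Fin n → ℝ)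
    (hQ : ∀ k j : Fin n, ∑ v ∈ Q j \ prefixUnion P k, ρ v ≤ g k)
    (hP : ∀ k, ∑ v ∈ P k \ prefixUnion P k, ρ v ≤ g k) :
    ∑ v ∈ univ.biUnion Q, ρ v - ∑ v ∈ univ.biUnion P, ρ v
      ≤ (Real.exp 1)⁻¹ * ∑ v ∈ univ.biUnion Q, ρ v
        + ∑ k, (g k - ∑ v ∈ P k \ prefixUnion P k, ρ v) := by
  rcases n.eq_zero_or_pos with rfl | hn
  · simp
  set F := ∑ v ∈ univ.biUnion Q, ρ v
  set a : ℕ → ℝ := fun k => ∑ v ∈ prefixUnion P k, ρ v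
  have hn' : (1 : ℝ) ≤ n := by exact_mod_cast hn
  have hinv : 1 / (n : ℝ) ≤ 1 := by rw [div_le_one (by positivity)]; exact hn'
  have hgap (k : Fin n) : F - a (k + 1) ≤ (1 - 1 / n) * (F - a k)
      + (g k - ∑ v ∈ P k \ prefixUnion P k, ρ v) := by
    have hF : F ≤ a k + n * g k := calc
      F ≤ a k + ∑ j, ∑ v ∈ Q j \ prefixUnion P k, ρ v :=
        sum_biUnion_le_sum_add_sum_sdiff hρ univ Q _
      _ ≤ a k + ∑ _j : Fin n, g k := by gcongr with j; exact hQ k j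
      _ = a k + n * g k := by simp
    have hdiv : (F - a k) / n ≤ g k := by rw [div_le_iff₀ (by positivity)]; linarith
    have hsplit : (1 - 1 / (n : ℝ)) * (F - a k) = F - a k - (F - a k) / n := by ring
    have hstep : a (k + 1) = a k + ∑ v ∈ P k \ prefixUnion P k, ρ v := sum_prefixUnion_succ ρ P k
    linarith
  have hgreedy := sub_le_pow_mul_add_sum_of_contraction (by linarith)
    (sub_le_self _ (by positivity)) a _ (fun k => sub_nonneg.mpr (hP k)) hgap
  simp only [a, prefixUnion_zero, prefixUnion_self, sum_empty, sub_zero] at hgreedy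
  have hpow : (1 - 1 / (n : ℝ)) ^ n ≤ (Real.exp 1)⁻¹ := by
    rw [← Real.exp_neg]; exact Real.one_sub_div_pow_le_exp_neg hn'
  have hF0 : 0 ≤ F := sum_nonneg fun v _ => hρ v
  linarith [mul_le_mul_of_nonneg_right hpow hF0]

end GreedyCoverage

theorem simple_regret_single_round_general {V : Type*} [Fintype V] [DecidableEq V]
    (N : ℕ) (ρ μ : V → ℝ) (σf : V → NNReal)
    (hρ : ∀ v, 0 ≤ ρ v) (β : ℝ)
    (hconf : ∀ v, |ρ v - μ v| ≤ Real.sqrt β * (σf v : ℝ))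
    (D : V → Finset V) (CD : ℝ)
    (hCD : ∀ y, ((D y).card : ℝ) ≤ CD * (Fintype.card V : ℝ))
    (x xt : Fin N → V) (E : Fin N → Finset V)
    (hE : ∀ i : Fin N,
      E i = (Finset.univ.filter (fun j : Fin N => j < i)).biUnion (fun j => D (x j)))
    (hucb : ∀ i : Fin N, ∀ y, ∑ v ∈ D y \ E i, (μ v + Real.sqrt β * (σf v : ℝ))
        ≤ ∑ v ∈ D (x i) \ E i, (μ v + Real.sqrt β * (σf v : ℝ)))
    (hxt : ∀ i : Fin N, ∀ y, ∑ v ∈ D y \ E i, ρ v ≤ ∑ v ∈ D (xt i) \ E i, ρ v)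
    (xstar : Fin N → V)
    (ε : ℝ) :
    (∀ i : Fin N,
      ((∑ v ∈ D (xt i) \ E i, ρ v) - ∑ v ∈ D (x i) \ E i, ρ v) / (Fintype.card V : ℝ)
          ≤ 2 * Real.sqrt β * (∑ v ∈ D (x i) \ E i, (σf v : ℝ)) / (Fintype.card V : ℝ) ∧
        2 * Real.sqrt β * (∑ v ∈ D (x i) \ E i, (σf v : ℝ)) / (Fintype.card V : ℝ)
          ≤ 2 * Real.sqrt β * CD * (((D (x i) \ E i).sup σf : NNReal) : ℝ)) ∧
      ((∑ i, 2 * Real.sqrt β * CD * (((D (x i) \ E i).sup σf : NNReal) : ℝ)) ≤ ε →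
        (1 - (Real.exp 1)⁻¹) *
            ((∑ v ∈ Finset.univ.biUnion (fun i => D (xstar i)), ρ v) /
              (Fintype.card V : ℝ)) - ε
          ≤ (∑ v ∈ Finset.univ.biUnion (fun i => D (x i)), ρ v) / (Fintype.card V : ℝ)) := by
  have hE' (i : Fin N) : E i = prefixUnion (fun j => D (x j)) i :=
    (hE i).trans (prefixUnion_coe _ i).symm
  have hregret (i : Fin N) :=
    regret_div_card_le_of_ucb_le (C := CD) _ _ hconf (hucb i (xt i))
    ((Nat.cast_le.mpr (card_le_card sdiff_subset)).trans (hCD (x i)))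
  refine ⟨hregret, fun hε => ?_⟩
  have hgreedy := sum_biUnion_sub_sum_biUnion_le_of_greedy hρ (fun j => D (x j))
    (fun j => D (xstar j)) (fun k => ∑ v ∈ D (xt k) \ E k, ρ v)
    (fun k j => hE' k ▸ hxt k (xstar j)) (fun k => hE' k ▸ hxt k (x k))
  simp only [← hE'] at hgreedy
  have hsum : (∑ i, ((∑ v ∈ D (xt i) \ E i, ρ v) - ∑ v ∈ D (x i) \ E i, ρ v))
      / (Fintype.card V : ℝ) ≤ ε := by
    rw [sum_div]
    exact (sum_le_sum fun i _ => (hregret i).1.trans (hregret i).2).trans hε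
  have hnormalized := div_le_div_of_nonneg_right hgreedy (Nat.cast_nonneg (Fintype.card V))
  rw [sub_div, add_div, mul_div_assoc] at hnormalized
  linarith

/-- Simple-regret bound at a single round of constrained greedy coverage: under two-sided
confidence bounds and UCB-greedy picks, each agent's instantaneous regret is bounded by
`2√β ∑ σ / |V| ≤ 2√β C_D max σ`; summing over agents, if the total bound is at most `ε`,
then the coverage of the chosen locations is at least `(1 - 1/e) F(X*) - ε`. -/
theorem simple_regret_single_round {V : Type*} [Fintype V] [DecidableEq V]
    (N : ℕ) (ρ μ : V → ℝ) (σf : V → NNReal)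
    (hρ : ∀ v, 0 ≤ ρ v) (β : ℝ) (hβ : 0 ≤ β)
    (hconf : ∀ v, |ρ v - μ v| ≤ Real.sqrt β * (σf v : ℝ))
    (D : V → Finset V) (CD : ℝ)
    (hCD : ∀ y, ((D y).card : ℝ) ≤ CD * (Fintype.card V : ℝ))
    (x xt : Fin N → V) (E : Fin N → Finset V)
    (hE : ∀ i : Fin N,
      E i = (Finset.univ.filter (fun j : Fin N => j < i)).biUnion (fun j => D (x j)))
    (hucb : ∀ i : Fin N, ∀ y, ∑ v ∈ D y \ E i, (μ v + Real.sqrt β * (σf v : ℝ))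
        ≤ ∑ v ∈ D (x i) \ E i, (μ v + Real.sqrt β * (σf v : ℝ)))
    (hxt : ∀ i : Fin N, ∀ y, ∑ v ∈ D y \ E i, ρ v ≤ ∑ v ∈ D (xt i) \ E i, ρ v)
    (xstar : Fin N → V)
    (hopt : ∀ y : Fin N → V,
      (∑ v ∈ Finset.univ.biUnion (fun i => D (y i)), ρ v) / (Fintype.card V : ℝ)
        ≤ (∑ v ∈ Finset.univ.biUnion (fun i => D (xstar i)), ρ v) / (Fintype.card V : ℝ))
    (ε : ℝ) :
    (∀ i : Fin N,
      ((∑ v ∈ D (xt i) \ E i, ρ v) - ∑ v ∈ D (x i) \ E i, ρ v) / (Fintype.card V : ℝ)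
          ≤ 2 * Real.sqrt β * (∑ v ∈ D (x i) \ E i, (σf v : ℝ)) / (Fintype.card V : ℝ) ∧
        2 * Real.sqrt β * (∑ v ∈ D (x i) \ E i, (σf v : ℝ)) / (Fintype.card V : ℝ)
          ≤ 2 * Real.sqrt β * CD * (((D (x i) \ E i).sup σf : NNReal) : ℝ)) ∧
      ((∑ i, 2 * Real.sqrt β * CD * (((D (x i) \ E i).sup σf : NNReal) : ℝ)) ≤ ε →
        (1 - (Real.exp 1)⁻¹) *
            ((∑ v ∈ Finset.univ.biUnion (fun i => D (xstar i)), ρ v) /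
              (Fintype.card V : ℝ)) - ε
          ≤ (∑ v ∈ Finset.univ.biUnion (fun i => D (x i)), ρ v) / (Fintype.card V : ℝ)) :=
  simple_regret_single_round_general N ρ μ σf hρ β hconf D CD hCD x xt E hE hucb hxt xstar ε
end
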